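/- arXiv:2406.16523 — 2 statements merged into one kernel-verified Lean document; each statement's English description precedes it below -/
import Mathlib

section
/- Let X_1,...,X_N be random variables with partial sums S_n such that for every k ∈ {1,...,N} the conditional median of S_N - S_k given S_1,...,S_k is 0 (equivalently, P(S_N - S_k ≥ 0 | S_1,...,S_k) ≥ 1/2 a.s.). Then for any b > 0, P(max_{1 ≤ n ≤ N} S_n ≥ b) ≤ 2 P(S_N ≥ b). -/
/-!
Split the event `max_{n ≤ N} S n ≥ b` according to the first time `k` with `S k ≥ b`. This event
`A k` is determined by `S 1, …, S k`, so integrating the conditional median hypothesis over it gives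
`P(A k) ≤ 2 P(A k ∩ {S N - S k ≥ 0})`, and on `A k ∩ {S N ≥ S k}` we have `S N ≥ b`. Summing over
the disjoint events `A k` gives the bound.
-/

open MeasureTheory Set
open scoped ENNReal

section Median

variable {Ω : Type*} {m m0 : MeasurableSpace Ω} {μ : Measure Ω} [IsFiniteMeasure μ]

theorem measure_le_two_mul_measure_inter_of_half_le_condExp (hm : m ≤ m0) {A D : Set Ω}
    (hA : MeasurableSet[m] A) (hD : MeasurableSet D)
    (hmed : ∀ᵐ ω ∂μ, (1 : ℝ) / 2 ≤ μ[D.indicator fun _ => (1 : ℝ) | m] ω) :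
    μ A ≤ 2 * μ (A ∩ D) := by
  have hreal : μ.real A / 2 ≤ μ.real (A ∩ D) :=
    calc μ.real A / 2 = ∫ _ in A, (1 : ℝ) / 2 ∂μ := by simp [div_eq_mul_inv]
      _ ≤ ∫ ω in A, μ[D.indicator fun _ => (1 : ℝ) | m] ω ∂μ :=
          setIntegral_mono_ae (integrableOn_const (measure_ne_top μ A))
            integrable_condExp.integrableOn hmed
      _ = ∫ ω in A, D.indicator (fun _ => (1 : ℝ)) ω ∂μ :=
          setIntegral_condExp hm ((integrable_const 1).indicator hD) hA
      _ = μ.real (A ∩ D) := by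
          rw [setIntegral_indicator hD, setIntegral_const, smul_eq_mul, mul_one,
            inter_comm]
  rw [← ENNReal.toReal_le_toReal (measure_ne_top μ A) (by finiteness), ENNReal.toReal_mul]
  simpa [measureReal_def, div_le_iff₀', mul_comm] using hreal

end Median

theorem MeasurableSet.disjointed_of_le {α : Type*} {m : MeasurableSpace α} {E : ℕ → Set α}
    {k : ℕ} (hE : ∀ j ≤ k, MeasurableSet (E j)) : MeasurableSet (disjointed E k) := by
  rw [disjointed_eq_inter_compl]
  exact (hE k le_rfl).inter
    (.iInter fun j => .iInter fun hj => (hE j (Nat.le_of_lt hj)).compl)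

theorem measure_partialSups_le_mul {α : Type*} {m : MeasurableSpace α} {μ : Measure α}
    {E : ℕ → Set α} {T : Set α} {c : ℝ≥0∞} {N : ℕ} (hE : ∀ k, MeasurableSet (E k))
    (hT : MeasurableSet T) (h : ∀ k ≤ N, μ (disjointed E k) ≤ c * μ (disjointed E k ∩ T)) :
    μ (partialSups E N) ≤ c * μ T := by
  have hF : ∀ k, MeasurableSet (disjointed E k) := MeasurableSet.disjointed hE
  rw [← biUnion_range_succ_disjointed]
  calc μ (⋃ k ∈ Finset.range (N + 1), disjointed E k)
      = ∑ k ∈ Finset.range (N + 1), μ (disjointed E k) :=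
        measure_biUnion_finset ((disjoint_disjointed E).set_pairwise _) fun k _ => hF k
    _ ≤ ∑ k ∈ Finset.range (N + 1), c * μ (disjointed E k ∩ T) :=
        Finset.sum_le_sum fun k hk => h k (Nat.lt_succ_iff.mp (Finset.mem_range.mp hk))
    _ = c * μ (⋃ k ∈ Finset.range (N + 1), disjointed E k ∩ T) := by
        have hdisj : Pairwise (Function.onFun Disjoint fun k => disjointed E k ∩ T) :=
          (disjoint_disjointed E).mono fun _ _ hd => hd.mono inter_subset_left inter_subset_left
        rw [measure_biUnion_finset (hdisj.set_pairwise _) fun k _ => (hF k).inter hT,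
          Finset.mul_sum]
    _ ≤ c * μ T := by
        gcongr
        exact iUnion₂_subset fun _ _ => inter_subset_right

section PartialSums

variable {Ω : Type*} (S : ℕ → Ω → ℝ)

abbrev pastSigma (k : ℕ) : MeasurableSpace Ω :=
  MeasurableSpace.comap (fun ω (i : Fin k) => S (i + 1) ω) inferInstance

variable {S}

theorem measurable_pastSigma {n k : ℕ} (hn : 1 ≤ n) (hnk : n ≤ k) :
    Measurable[pastSigma S k] (S n) := by
  obtain ⟨j, rfl⟩ : ∃ j, n = j + 1 := ⟨n - 1, by omega⟩
  exact (measurable_pi_apply (X := fun _ : Fin k => ℝ) ⟨j, by omega⟩).comp (comap_measurable _)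

theorem pastSigma_le [m0 : MeasurableSpace Ω] (hS : ∀ n, Measurable (S n)) (k : ℕ) :
    pastSigma S k ≤ m0 :=
  (measurable_pi_lambda _ fun i : Fin k => hS ((i : ℕ) + 1)).comap_le

end PartialSums

theorem generalised_levy_inequality_general
    {Ω : Type*} [MeasurableSpace Ω] (μ : Measure Ω) [IsProbabilityMeasure μ]
    (N : ℕ) (X : ℕ → Ω → ℝ) (hXmeas : ∀ i, Measurable (X i))
    (S : ℕ → Ω → ℝ) (hS : ∀ n ω, S n ω = ∑ i ∈ Finset.range n, X i ω)
    (hMed : ∀ k, 1 ≤ k → k ≤ N →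
      ∀ᵐ ω ∂μ, (1:ℝ)/2 ≤
        (MeasureTheory.condExp
          (MeasurableSpace.comap (fun ω' => fun i : Fin k => S (i + 1) ω') inferInstance)
          μ (fun ω' => Set.indicator (Set.Ici (0:ℝ)) (fun _ => (1:ℝ)) (S N ω' - S k ω'))) ω)
    (b : ℝ) :
    μ {ω | ∃ n, 1 ≤ n ∧ n ≤ N ∧ b ≤ S n ω} ≤ 2 * μ {ω | b ≤ S N ω} := by
  have hSmeas (n : ℕ) : Measurable (S n) :=
    funext (hS n) ▸ Finset.measurable_sum _ fun i _ => hXmeas i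
  set E : ℕ → Set Ω := fun n => {ω | 1 ≤ n ∧ b ≤ S n ω} with hE
  have hE_past {j k : ℕ} (hjk : j ≤ k) : MeasurableSet[pastSigma S k] (E j) := by
    by_cases hj : 1 ≤ j
    · have h : MeasurableSet[pastSigma S k] {ω | b ≤ S j ω} :=
        measurableSet_le measurable_const (measurable_pastSigma hj hjk)
      simpa [hE, hj] using h
    · simp [hE, hj]
  have hunion : {ω | ∃ n, 1 ≤ n ∧ n ≤ N ∧ b ≤ S n ω} = partialSups E N := by
    ext ω
    simp [partialSups_eq_biUnion_range, hE]
  rw [hunion]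
  refine measure_partialSups_le_mul (fun k => pastSigma_le hSmeas k _ (hE_past le_rfl))
    (measurableSet_le measurable_const (hSmeas N)) fun k hkN => ?_
  rcases Nat.eq_zero_or_pos k with rfl | hk
  · simp [hE]
  calc μ (disjointed E k) ≤ 2 * μ (disjointed E k ∩ {ω | 0 ≤ S N ω - S k ω}) :=
        measure_le_two_mul_measure_inter_of_half_le_condExp (pastSigma_le hSmeas k)
          (MeasurableSet.disjointed_of_le fun j => hE_past)
          (measurableSet_le measurable_const ((hSmeas N).sub (hSmeas k))) (hMed k hk hkN)
    _ ≤ 2 * μ (disjointed E k ∩ {ω | b ≤ S N ω}) := by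
        refine mul_le_mul_right (measure_mono ?_) 2
        rintro ω ⟨hωF, hωD⟩
        have hbk : b ≤ S k ω := (disjointed_subset E k hωF).2
        have hNk : 0 ≤ S N ω - S k ω := hωD
        exact ⟨hωF, show b ≤ S N ω by linarith⟩

/-- Generalised Lévy maximal inequality: if conditionally on the past partial
sums the remaining sum `S N - S k` is at least as likely to be nonnegative as
negative (conditional median 0), then the running maximum satisfies
`P(max_{1 ≤ n ≤ N} S n ≥ b) ≤ 2 P(S N ≥ b)`. -/
theorem generalised_levy_inequality
    {Ω : Type*} [MeasurableSpace Ω] (μ : Measure Ω) [IsProbabilityMeasure μ]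
    (N : ℕ) (hN : 1 ≤ N) (X : ℕ → Ω → ℝ) (hXmeas : ∀ i, Measurable (X i))
    (S : ℕ → Ω → ℝ) (hS : ∀ n ω, S n ω = ∑ i ∈ Finset.range n, X i ω)
    (hMed : ∀ k, 1 ≤ k → k ≤ N →
      ∀ᵐ ω ∂μ, (1:ℝ)/2 ≤
        (MeasureTheory.condExp
          (MeasurableSpace.comap (fun ω' => fun i : Fin k => S (i + 1) ω') inferInstance)
          μ (fun ω' => Set.indicator (Set.Ici (0:ℝ)) (fun _ => (1:ℝ)) (S N ω' - S k ω'))) ω)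
    (b : ℝ) (hb : 0 < b) :
    μ {ω | ∃ n, 1 ≤ n ∧ n ≤ N ∧ b ≤ S n ω} ≤ 2 * μ {ω | b ≤ S N ω} :=
  generalised_levy_inequality_general μ N X hXmeas S hS hMed b
end

section
/- Let X_1, X_2, ... be random variables with E[X_i] = μ_i > 0, S_n = X_1 + ... + X_n, Var(S_N) > 0, V_N = Var(S_N)/N stochastically bounded, and suppose (S_N - Σ_{i=1}^N μ_i)/√Var(S_N) converges in distribution to a standard normal. If inf_i μ_i > 0, then P(max_{1 ≤ n ≤ N} S_n > z_{1-α/2} √(N V_N)) → 1 as N → ∞. -/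
open MeasureTheory ProbabilityTheory Filter

/-- Standard normal CDF. -/
noncomputable def stdGaussianCDF (x : ℝ) : ℝ :=
  ((gaussianReal 0 1) (Set.Iic x)).toReal

lemma exists_stdGaussianCDF_lt {ε : ℝ} (hε : 0 < ε) : ∃ x : ℝ, stdGaussianCDF x < ε := by
  have h := tendsto_measure_Ici_atBot (gaussianReal 0 1)
  have h1 : (gaussianReal 0 1) Set.univ = 1 := measure_univ
  rw [h1] at h
  have h2 := (ENNReal.tendsto_toReal (by norm_num)).comp h
  simp only [ENNReal.toReal_one] at h2
  have := h2.eventually (eventually_gt_nhds (show 1 - ε < 1 by linarith))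
  obtain ⟨y, hy⟩ := this.exists
  refine ⟨y - 1, ?_⟩
  have hsub : Set.Iic (y - 1) ⊆ (Set.Ici y)ᶜ := by
    intro t ht; simp only [Set.mem_compl_iff, Set.mem_Ici, not_le]
    simp only [Set.mem_Iic] at ht; linarith
  have hle : (gaussianReal 0 1) (Set.Iic (y - 1)) ≤ (gaussianReal 0 1) (Set.Ici y)ᶜ :=
    measure_mono hsub
  have hc : (gaussianReal 0 1) (Set.Ici y)ᶜ = 1 - (gaussianReal 0 1) (Set.Ici y) := by
    rw [measure_compl measurableSet_Ici (measure_ne_top _ _), h1]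
  have hfin : (gaussianReal 0 1) (Set.Iic (y-1)) ≠ ⊤ := measure_ne_top _ _
  unfold stdGaussianCDF
  have : ((gaussianReal 0 1) (Set.Iic (y-1))).toReal ≤ ((gaussianReal 0 1) (Set.Ici y)ᶜ).toReal :=
    ENNReal.toReal_mono (measure_ne_top _ _) hle
  rw [hc, ENNReal.toReal_sub_of_le (by exact measure_mono (Set.subset_univ _) |>.trans h1.le) (by norm_num)] at this
  simp only [ENNReal.toReal_one] at this
  simp only [Function.comp] at hy
  linarith

/-- Power theorem (Theorem 2 of YEAST): if the increment means are bounded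
below by a positive constant, `V_N = Var(S_N)/N` is stochastically bounded and
the centred standardised sum is asymptotically standard normal, then the
probability that the running maximum crosses the threshold
`z_{1-α/2} √(N V_N) = z_{1-α/2} √Var(S_N)` tends to one. -/
theorem yeast_power
    {Ω : Type*} [MeasurableSpace Ω] (μ : Measure Ω) [IsProbabilityMeasure μ]
    (X : ℕ → Ω → ℝ) (hXmeas : ∀ i, Measurable (X i)) (hXint : ∀ i, Integrable (X i) μ)
    (hμpos : ∃ c : ℝ, 0 < c ∧ ∀ i, c ≤ ∫ ω, X i ω ∂μ)
    (S : ℕ → Ω → ℝ) (hS : ∀ n ω, S n ω = ∑ i ∈ Finset.range n, X i ω)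
    (hvar : ∀ N, 1 ≤ N → 0 < variance (S N) μ)
    (hVbdd : ∀ ε : ℝ, 0 < ε → ∃ M : ℝ, 0 < M ∧ ∃ N₀ : ℕ, ∀ N, N₀ ≤ N →
      1 - ε ≤ (μ {ω | variance (S N) μ / N ≤ M}).toReal)
    (hclt : ∀ x : ℝ,
      Tendsto
        (fun N => (μ {ω |
          (S N ω - ∑ i ∈ Finset.range N, ∫ ω', X i ω' ∂μ)
            / Real.sqrt (variance (S N) μ) ≤ x}).toReal)
        atTop (nhds (stdGaussianCDF x)))
    (α : ℝ) (hα : α ∈ Set.Ioo (0:ℝ) 1)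
    (z : ℝ) (hz : stdGaussianCDF z = 1 - α / 2) :
    Tendsto
      (fun N : ℕ =>
        (μ {ω | ∃ n, 1 ≤ n ∧ n ≤ N ∧ z * Real.sqrt (variance (S N) μ) < S n ω}).toReal)
      atTop (nhds 1) := by
  obtain ⟨c, hc, hcle⟩ := hμpos
  obtain ⟨M, hM, N₀, hN₀⟩ := hVbdd (1/2) (by norm_num)
  -- the variance bound is deterministic
  have hVar : ∀ N, N₀ ≤ N → variance (S N) μ / N ≤ M := by
    intro N hN
    by_contra h
    have hempty : {ω : Ω | variance (S N) μ / N ≤ M} = ∅ := by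
      ext ω; simp only [Set.mem_setOf_eq, Set.mem_empty_iff_false, iff_false]; exact h
    have := hN₀ N hN
    rw [hempty] at this
    simp at this
    linarith
  set m : ℕ → ℝ := fun N => ∑ i ∈ Finset.range N, ∫ ω', X i ω' ∂μ with hm_def
  have hm : ∀ N, c * N ≤ m N := by
    intro N
    calc c * N = ∑ _i ∈ Finset.range N, c := by
          rw [Finset.sum_const, Finset.card_range, nsmul_eq_mul, mul_comm]
      _ ≤ m N := Finset.sum_le_sum fun i _ => hcle i
  have hSmeas : ∀ N, Measurable (S N) := by
    intro N
    have : S N = fun ω => ∑ i ∈ Finset.range N, X i ω := funext (hS N)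
    rw [this]
    exact Finset.measurable_sum _ fun i _ => hXmeas i
  set f : ℕ → ℝ := fun N =>
    (μ {ω | ∃ n, 1 ≤ n ∧ n ≤ N ∧ z * Real.sqrt (variance (S N) μ) < S n ω}).toReal with hf_def
  have hf_le_one : ∀ N, f N ≤ 1 := by
    intro N
    have h1 : (μ Set.univ).toReal = 1 := by simp
    calc f N ≤ (μ Set.univ).toReal :=
          ENNReal.toReal_mono (measure_ne_top _ _) (measure_mono (Set.subset_univ _))
      _ = 1 := h1
  rw [tendsto_order]
  constructor
  · intro a ha
    set ε : ℝ := 1 - a with hε_def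
    have hε : 0 < ε := by simp [hε_def]; linarith
    obtain ⟨x, hx⟩ := exists_stdGaussianCDF_lt (show 0 < ε / 2 by linarith)
    -- eventually the CLT probability is < ε
    have hev1 : ∀ᶠ N in atTop, (μ {ω |
        (S N ω - m N) / Real.sqrt (variance (S N) μ) ≤ x}).toReal < ε :=
      (hclt x).eventually_lt_const (by linarith)
    -- eventually √N is big enough
    set b : ℝ := (z - x) * Real.sqrt M / c with hb_def
    have hev2 : ∀ᶠ N : ℕ in atTop, b ≤ Real.sqrt N := by
      filter_upwards [eventually_ge_atTop ⌈b ^ 2⌉₊] with N hN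
      have h1 : b ^ 2 ≤ (N : ℝ) := le_trans (Nat.le_ceil _) (Nat.cast_le.2 hN)
      calc b ≤ |b| := le_abs_self b
        _ = Real.sqrt (b ^ 2) := (Real.sqrt_sq_eq_abs b).symm
        _ ≤ Real.sqrt N := Real.sqrt_le_sqrt h1
    filter_upwards [hev1, hev2, eventually_ge_atTop N₀, eventually_ge_atTop 1]
      with N hclt' hsqrt hN₀' hN1
    -- setup
    set v : ℝ := variance (S N) μ with hv_def
    have hv : 0 < v := hvar N hN1
    have hsv : 0 < Real.sqrt v := Real.sqrt_pos.2 hv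
    have hNposR : (0:ℝ) < N := by exact_mod_cast hN1
    have hvMN : v ≤ M * N := by
      have := hVar N hN₀'
      rw [div_le_iff₀ hNposR] at this; linarith
    have hsvle : Real.sqrt v ≤ Real.sqrt M * Real.sqrt N := by
      rw [← Real.sqrt_mul hM.le]
      exact Real.sqrt_le_sqrt hvMN
    -- threshold comparison : z - m N / √v ≤ x
    have hthr : z - m N / Real.sqrt v ≤ x := by
      have hmN : c * N ≤ m N := hm N
      have hNsq : (N : ℝ) = Real.sqrt N * Real.sqrt N :=
        (Real.mul_self_sqrt hNposR.le).symm
      have hkey : (z - x) * Real.sqrt v ≤ m N := by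
        calc (z - x) * Real.sqrt v ≤ c * Real.sqrt N / Real.sqrt M * Real.sqrt v := by
              by_cases hzx : 0 ≤ z - x
              · have hb' : b ≤ Real.sqrt N := hsqrt
                have : (z - x) ≤ c * Real.sqrt N / Real.sqrt M := by
                  rw [le_div_iff₀ (Real.sqrt_pos.2 hM)]
                  rw [hb_def, div_le_iff₀ hc] at hb'
                  nlinarith
                exact mul_le_mul_of_nonneg_right this hsv.le
              · push_neg at hzx
                have h1 : (z - x) * Real.sqrt v ≤ 0 :=
                  mul_nonpos_of_nonpos_of_nonneg hzx.le hsv.le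
                have h2 : 0 ≤ c * Real.sqrt N / Real.sqrt M * Real.sqrt v := by positivity
                linarith
          _ ≤ c * Real.sqrt N / Real.sqrt M * (Real.sqrt M * Real.sqrt N) := by
              apply mul_le_mul_of_nonneg_left hsvle
              positivity
          _ = c * N := by
              have hM' : Real.sqrt M ≠ 0 := (Real.sqrt_pos.2 hM).ne'
              calc c * Real.sqrt N / Real.sqrt M * (Real.sqrt M * Real.sqrt N)
                  = c * (Real.sqrt N * Real.sqrt N) * (Real.sqrt M / Real.sqrt M) := by ring
                _ = c * N := by rw [div_self hM', Real.mul_self_sqrt hNposR.le, mul_one]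
          _ ≤ m N := hmN
      have h2 : z - x ≤ m N / Real.sqrt v := by
        rw [le_div_iff₀ hsv]; exact hkey
      linarith
    -- subset chains
    have hsub1 : {ω | S N ω ≤ z * Real.sqrt v} ⊆
        {ω | (S N ω - m N) / Real.sqrt v ≤ x} := by
      intro ω hω
      simp only [Set.mem_setOf_eq] at hω ⊢
      rw [div_le_iff₀ hsv]
      have h3 : (z - m N / Real.sqrt v) * Real.sqrt v ≤ x * Real.sqrt v :=
        mul_le_mul_of_nonneg_right hthr hsv.le
      have h4 : (z - m N / Real.sqrt v) * Real.sqrt v = z * Real.sqrt v - m N := by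
        field_simp
      linarith
    have hsub2 : {ω | z * Real.sqrt v < S N ω} ⊆
        {ω | ∃ n, 1 ≤ n ∧ n ≤ N ∧ z * Real.sqrt v < S n ω} := by
      intro ω hω
      exact ⟨N, hN1, le_refl N, hω⟩
    have hmeas_le : MeasurableSet {ω | S N ω ≤ z * Real.sqrt v} :=
      measurableSet_le (hSmeas N) measurable_const
    have hcompl : {ω | z * Real.sqrt v < S N ω} = {ω | S N ω ≤ z * Real.sqrt v}ᶜ := by
      ext ω; simp [not_le]
    have hprob : μ {ω | z * Real.sqrt v < S N ω} =
        1 - μ {ω | S N ω ≤ z * Real.sqrt v} := by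
      rw [hcompl, measure_compl hmeas_le (measure_ne_top _ _), measure_univ]
    have hle1 : μ {ω | S N ω ≤ z * Real.sqrt v} ≤ 1 := prob_le_one
    have htoReal : (μ {ω | z * Real.sqrt v < S N ω}).toReal =
        1 - (μ {ω | S N ω ≤ z * Real.sqrt v}).toReal := by
      rw [hprob, ENNReal.toReal_sub_of_le hle1 (by norm_num), ENNReal.toReal_one]
    have hsmall : (μ {ω | S N ω ≤ z * Real.sqrt v}).toReal < ε :=
      lt_of_le_of_lt (ENNReal.toReal_mono (measure_ne_top _ _) (measure_mono hsub1)) hclt'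
    have hfinal : 1 - ε < (μ {ω | z * Real.sqrt v < S N ω}).toReal := by
      rw [htoReal]; linarith
    have hmono : (μ {ω | z * Real.sqrt v < S N ω}).toReal ≤ f N :=
      ENNReal.toReal_mono (measure_ne_top _ _) (measure_mono hsub2)
    have : a = 1 - ε := by rw [hε_def]; ring
    rw [this]
    linarith
  · intro a ha
    exact Filter.Eventually.of_forall fun N => lt_of_le_of_lt (hf_le_one N) ha
end
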